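/- Let A be n×n, B n×m, E n×d, Q symmetric positive semidefinite, R symmetric positive definite, α ∈ (0,1), λ > 0, P a symmetric positive semidefinite n×n matrix with λI − αEᵀPE positive definite, g ∈ ℝⁿ, z ∈ ℝ, and w̄ ∈ ℝ^d. With the blocks H_xx = Q + αAᵀPA, H_xu = αAᵀPB, H_xw = αAᵀPE, H_uu = R + αBᵀPB, H_uw = αBᵀPE, H_ww = αEᵀPE − λI, G_x = αAᵀg, G_u = αBᵀg, G_w = αEᵀg + 2λw̄, for every x ∈ ℝⁿ: min_{u∈ℝ^m} sup_{w∈ℝ^d} { xᵀQx + uᵀRu − λ‖w−w̄‖² + α[(Ax+Bu+Ew)ᵀP(Ax+Bu+Ew) + gᵀ(Ax+Bu+Ew) + z] } = xᵀP⁺x + (g⁺)ᵀx + z_c, where P⁺ = H_xx − [H_xu H_xw] [[H_uu, H_uw],[H_uwᵀ, H_ww]]⁻¹ [H_xuᵀ; H_xwᵀ], g⁺ = G_x − [H_xu H_xw] [[H_uu, H_uw],[H_uwᵀ, H_ww]]⁻¹ [G_u; G_w], z_c = αz − λ‖w̄‖² − ¼ tr(H_ww⁻¹ G_w G_wᵀ)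 − ¼ (G_u − H_uw H_ww⁻¹ G_w)ᵀ (H_uu − H_uw H_ww⁻¹ H_uwᵀ)⁻¹ (G_u − H_uw H_ww⁻¹ G_w), and the unique outer minimizer is u* = Kx + r with K = (H_uu − H_uw H_ww⁻¹ H_uwᵀ)⁻¹(H_uw H_ww⁻¹ H_xwᵀ − H_xuᵀ) and r = −½(H_uu − H_uw H_ww⁻¹ H_uwᵀ)⁻¹(G_u − H_uw H_ww⁻¹ G_w). -/

import Mathlib

/-!
For fixed `u`, the payoff is a quadratic in `w` with Hessian `Hww ≺ 0`, so its supremum is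
attained at the critical point, and what remains is a quadratic in `u` whose Hessian is the
Schur complement `S = Huu - Huw Hww⁻¹ Huwᵀ ≻ 0`; its unique minimizer is `u* = Kx + r`.
Completing the square twice leaves a nested critical value, and the block-inverse formula for
`H = [[Huu, Huw], [Huwᵀ, Hww]]` identifies it with the critical value of the joint quadratic in
`(u, w)`, which is the quadratic `xᵀP⁺x + g⁺ᵀx + z_c`.
-/

open Matrix

lemma Matrix.transpose_mulVec_dotProduct {R m n : Type*} [CommSemiring R] [Fintype m]
    [Fintype n] (F : Matrix m n R) (x : m → R) (v : n → R) :
    (Fᵀ *ᵥ x) ⬝ᵥ v = x ⬝ᵥ (F *ᵥ v) := by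
  rw [mulVec_transpose, ← dotProduct_mulVec]

lemma Matrix.IsSymm.dotProduct_mulVec_comm {R n : Type*} [CommSemiring R] [Fintype n]
    {M : Matrix n n R} (hM : M.IsSymm) (a b : n → R) :
    a ⬝ᵥ (M *ᵥ b) = b ⬝ᵥ (M *ᵥ a) := by
  rw [dotProduct_mulVec, ← vecMul_transpose, hM.eq, dotProduct_comm]

lemma Matrix.PosDef.isSymm {n : Type*} [Fintype n] {M : Matrix n n ℝ} (hM : M.PosDef) :
    M.IsSymm :=
  isHermitian_iff_isSymm.mp hM.isHermitian

section Quadratic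

variable {k l : Type*} [Fintype k] [Fintype l] [DecidableEq k]

def quadratic (M : Matrix k k ℝ) (b : k → ℝ) (c : ℝ) (v : k → ℝ) : ℝ :=
  v ⬝ᵥ (M *ᵥ v) + b ⬝ᵥ v + c

noncomputable def criticalPoint (M : Matrix k k ℝ) (b : k → ℝ) : k → ℝ :=
  (-(1 / 2 : ℝ)) • (M⁻¹ *ᵥ b)

noncomputable def criticalValue (M : Matrix k k ℝ) (b : k → ℝ) (c : ℝ) : ℝ :=
  c - 1 / 4 * (b ⬝ᵥ (M⁻¹ *ᵥ b))

lemma quadratic_eq_criticalValue_add {M : Matrix k k ℝ} (hM : M.IsSymm) (hMu : IsUnit M)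
    (b : k → ℝ) (c : ℝ) (v : k → ℝ) :
    quadratic M b c v = criticalValue M b c
      + (v - criticalPoint M b) ⬝ᵥ (M *ᵥ (v - criticalPoint M b)) := by
  have hcrit : M *ᵥ criticalPoint M b = (-(1 / 2 : ℝ)) • b := by
    rw [criticalPoint, mulVec_smul, mulVec_mulVec,
      mul_nonsing_inv _ ((isUnit_iff_isUnit_det M).mp hMu), one_mulVec]
  have hswap := hM.dotProduct_mulVec_comm (criticalPoint M b) v
  simp only [quadratic, criticalValue, mulVec_sub, dotProduct_sub, sub_dotProduct, hcrit, hswap]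
  simp only [criticalPoint, dotProduct_smul, smul_dotProduct, smul_eq_mul, dotProduct_comm b v,
    dotProduct_comm b (M⁻¹ *ᵥ b)]
  ring

lemma quadratic_criticalPoint {M : Matrix k k ℝ} (hM : M.IsSymm) (hMu : IsUnit M)
    (b : k → ℝ) (c : ℝ) : quadratic M b c (criticalPoint M b) = criticalValue M b c := by
  simp [quadratic_eq_criticalValue_add hM hMu]

lemma iSup_quadratic {M : Matrix k k ℝ} (hM : (-M).PosDef) (b : k → ℝ) (c : ℝ) :
    ⨆ v, quadratic M b c v = criticalValue M b c := by
  have hMs : M.IsSymm := by simpa using hM.isSymm.neg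
  have hMu : IsUnit M := by simpa using hM.isUnit.neg
  refine IsLUB.ciSup_eq (IsGreatest.isLUB ⟨⟨_, quadratic_criticalPoint hMs hMu b c⟩, ?_⟩)
  rintro _ ⟨v, rfl⟩
  have := hM.posSemidef.dotProduct_mulVec_nonneg (v - criticalPoint M b)
  simp only [star_trivial, neg_mulVec, dotProduct_neg] at this
  linarith [quadratic_eq_criticalValue_add hMs hMu b c v]

lemma quadratic_criticalPoint_le {M : Matrix k k ℝ} (hM : M.PosDef) (b : k → ℝ) (c : ℝ)
    (v : k → ℝ) : quadratic M b c (criticalPoint M b) ≤ quadratic M b c v := by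
  have := hM.posSemidef.dotProduct_mulVec_nonneg (v - criticalPoint M b)
  simp only [star_trivial] at this
  linarith [quadratic_eq_criticalValue_add hM.isSymm hM.isUnit b c v,
    quadratic_criticalPoint hM.isSymm hM.isUnit b c]

lemma quadratic_criticalPoint_lt {M : Matrix k k ℝ} (hM : M.PosDef) (b : k → ℝ) (c : ℝ)
    {v : k → ℝ} (hv : v ≠ criticalPoint M b) :
    quadratic M b c (criticalPoint M b) < quadratic M b c v := by
  have := hM.dotProduct_mulVec_pos (sub_ne_zero.mpr hv)
  simp only [star_trivial] at this
  linarith [quadratic_eq_criticalValue_add hM.isSymm hM.isUnit b c v,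
    quadratic_criticalPoint hM.isSymm hM.isUnit b c]

lemma iInf_quadratic {M : Matrix k k ℝ} (hM : M.PosDef) (b : k → ℝ) (c : ℝ) :
    ⨅ v, quadratic M b c v = criticalValue M b c := by
  rw [← quadratic_criticalPoint hM.isSymm hM.isUnit b c]
  refine IsGLB.ciInf_eq (IsLeast.isGLB ⟨⟨_, rfl⟩, ?_⟩)
  rintro _ ⟨v, rfl⟩
  exact quadratic_criticalPoint_le hM b c v

lemma Matrix.PosDef.sub_mul_inv_mul_transpose [DecidableEq l] {A : Matrix l l ℝ}
    {D : Matrix k k ℝ} (hA : A.PosDef) (hD : (-D).PosDef) (B : Matrix l k ℝ) :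
    (A - B * D⁻¹ * Bᵀ).PosDef := by
  have hDu : IsUnit D := by simpa using hD.isUnit.neg
  have hinv : (-D)⁻¹ = -D⁻¹ :=
    inv_eq_right_inv (by rw [neg_mul_neg, mul_nonsing_inv _ ((isUnit_iff_isUnit_det D).mp hDu)])
  have hpsd := hD.inv.posSemidef.mul_mul_conjTranspose_same B
  rw [hinv, conjTranspose_eq_transpose_of_trivial, Matrix.mul_neg, Matrix.neg_mul] at hpsd
  simpa [sub_eq_add_neg] using hA.add_posSemidef hpsd

lemma criticalValue_add_two_smul_transpose_mulVec {n : Type*} [Fintype n] {D : Matrix k k ℝ}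
    (hD : D.IsSymm) (A : Matrix n n ℝ) (F : Matrix n k ℝ) (a : n → ℝ) (G : k → ℝ) (c : ℝ)
    (x : n → ℝ) :
    criticalValue D (G + (2 : ℝ) • (Fᵀ *ᵥ x)) (quadratic A a c x)
      = quadratic (A - F * D⁻¹ * Fᵀ) (a - (F * D⁻¹) *ᵥ G) (criticalValue D G c) x := by
  have hswap := hD.inv.dotProduct_mulVec_comm G (Fᵀ *ᵥ x)
  simp only [criticalValue, quadratic, sub_mulVec, ← mulVec_mulVec, mulVec_add, mulVec_smul,
    dotProduct_add, add_dotProduct, dotProduct_sub, dotProduct_smul, smul_dotProduct, smul_eq_mul,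
    hswap, transpose_mulVec_dotProduct, dotProduct_comm _ x]
  ring

lemma criticalValue_fromBlocks [DecidableEq l] {A : Matrix l l ℝ} {B : Matrix l k ℝ}
    {D : Matrix k k ℝ} (hD : D.IsSymm) (hDu : IsUnit D) (hS : IsUnit (A - B * D⁻¹ * Bᵀ))
    (bu : l → ℝ) (bw : k → ℝ) (c : ℝ) :
    criticalValue (fromBlocks A B Bᵀ D) (Sum.elim bu bw) c
      = criticalValue (A - B * D⁻¹ * Bᵀ) (bu - (B * D⁻¹) *ᵥ bw) (criticalValue D bw c) := by
  let := hDu.invertible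
  let : Invertible (A - B * ⅟D * Bᵀ) := by rw [invOf_eq_nonsing_inv]; exact hS.invertible
  let := fromBlocks₂₂Invertible A B Bᵀ D
  rw [criticalValue, ← invOf_eq_nonsing_inv, invOf_fromBlocks₂₂_eq]
  simp only [invOf_eq_nonsing_inv, fromBlocks_mulVec, Sum.elim_comp_inl, Sum.elim_comp_inr,
    sumElim_dotProduct_sumElim, criticalValue]
  set S := A - B * D⁻¹ * Bᵀ
  have hswap (v : l → ℝ) :
      ((B * D⁻¹) *ᵥ bw) ⬝ᵥ (S⁻¹ *ᵥ v) = bw ⬝ᵥ ((D⁻¹ * Bᵀ * S⁻¹) *ᵥ v) := by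
    rw [← mulVec_mulVec v (D⁻¹ * Bᵀ), show D⁻¹ * Bᵀ = (B * D⁻¹)ᵀ by
      rw [transpose_mul, hD.inv.eq]]
    conv_rhs => rw [← transpose_mulVec_dotProduct, transpose_transpose]
  simp only [neg_mulVec, add_mulVec, mulVec_sub, dotProduct_add, dotProduct_sub,
    sub_dotProduct, dotProduct_neg, hswap]
  simp only [mulVec_mulVec, Matrix.mul_assoc]
  ring

lemma criticalValue_schurComplement_eq_quadratic {n : Type*} [Fintype n] [DecidableEq l]
    {A : Matrix l l ℝ} {B : Matrix l k ℝ} {D : Matrix k k ℝ} (hA : A.IsSymm) (hD : D.IsSymm)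
    (hDu : IsUnit D) (hS : IsUnit (A - B * D⁻¹ * Bᵀ)) (C : Matrix n n ℝ) (Fu : Matrix n l ℝ)
    (Fw : Matrix n k ℝ) (a : n → ℝ) (bu : l → ℝ) (bw : k → ℝ) (c : ℝ) (x : n → ℝ) :
    criticalValue (A - B * D⁻¹ * Bᵀ)
        (bu + (2 : ℝ) • (Fuᵀ *ᵥ x) - (B * D⁻¹) *ᵥ (bw + (2 : ℝ) • (Fwᵀ *ᵥ x)))
        (criticalValue D (bw + (2 : ℝ) • (Fwᵀ *ᵥ x)) (quadratic C a c x))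
      = quadratic (C - fromCols Fu Fw * (fromBlocks A B Bᵀ D)⁻¹ * (fromCols Fu Fw)ᵀ)
          (a - (fromCols Fu Fw * (fromBlocks A B Bᵀ D)⁻¹) *ᵥ Sum.elim bu bw)
          (criticalValue (fromBlocks A B Bᵀ D) (Sum.elim bu bw) c) x := by
  have hb : Sum.elim (bu + (2 : ℝ) • (Fuᵀ *ᵥ x)) (bw + (2 : ℝ) • (Fwᵀ *ᵥ x))
      = Sum.elim bu bw + (2 : ℝ) • ((fromCols Fu Fw)ᵀ *ᵥ x) := by
    ext (i | i) <;> simp [transpose_fromCols]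
  rw [← criticalValue_fromBlocks hD hDu hS, hb,
    criticalValue_add_two_smul_transpose_mulVec (hA.fromBlocks rfl hD)]

end Quadratic

lemma bellmanPayoff_eq_quadratic {X U W : Type*} [Fintype X] [Fintype U] [Fintype W]
    [DecidableEq W] {A : Matrix X X ℝ} {B : Matrix X U ℝ} {E : Matrix X W ℝ}
    {Q : Matrix X X ℝ} {R : Matrix U U ℝ} {P : Matrix X X ℝ} (hP : P.IsSymm)
    {α lam : ℝ} (z : ℝ) {g : X → ℝ} {wbar : W → ℝ}
    {Hxx : Matrix X X ℝ} {Hxu : Matrix X U ℝ} {Hxw : Matrix X W ℝ} {Huu : Matrix U U ℝ}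
    {Huw : Matrix U W ℝ} {Hww : Matrix W W ℝ} {Gx : X → ℝ} {Gu : U → ℝ} {Gw : W → ℝ}
    (hHxx : Hxx = Q + α • (Aᵀ * P * A)) (hHxu : Hxu = α • (Aᵀ * P * B))
    (hHxw : Hxw = α • (Aᵀ * P * E)) (hHuu : Huu = R + α • (Bᵀ * P * B))
    (hHuw : Huw = α • (Bᵀ * P * E)) (hHww : Hww = α • (Eᵀ * P * E) - lam • 1)
    (hGx : Gx = α • (Aᵀ *ᵥ g)) (hGu : Gu = α • (Bᵀ *ᵥ g))
    (hGw : Gw = α • (Eᵀ *ᵥ g) + (2 * lam) • wbar) (x : X → ℝ) (u : U → ℝ) (w : W → ℝ) :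
    x ⬝ᵥ (Q *ᵥ x) + u ⬝ᵥ (R *ᵥ u) - lam * ((w - wbar) ⬝ᵥ (w - wbar))
      + α * ((A *ᵥ x + B *ᵥ u + E *ᵥ w) ⬝ᵥ (P *ᵥ (A *ᵥ x + B *ᵥ u + E *ᵥ w))
        + g ⬝ᵥ (A *ᵥ x + B *ᵥ u + E *ᵥ w) + z)
      = quadratic Hww (Gw + (2 : ℝ) • (Hxwᵀ *ᵥ x) + (2 : ℝ) • (Huwᵀ *ᵥ u))
          (quadratic Huu (Gu + (2 : ℝ) • (Hxuᵀ *ᵥ x))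
            (quadratic Hxx Gx (α * z - lam * (wbar ⬝ᵥ wbar)) x) u) w := by
  subst hHxx hHxu hHxw hHuu hHuw hHww hGx hGu hGw
  simp only [quadratic, add_mulVec, sub_mulVec, smul_mulVec, mulVec_add, ← mulVec_mulVec,
    one_mulVec, transpose_smul, transpose_mul, transpose_transpose, hP.eq, dotProduct_add,
    add_dotProduct, dotProduct_sub, sub_dotProduct, dotProduct_smul, smul_dotProduct, smul_eq_mul,
    transpose_mulVec_dotProduct, dotProduct_transpose_mulVec]
  linear_combination lam * dotProduct_comm w wbar
    + α * hP.dotProduct_mulVec_comm (A *ᵥ x) (E *ᵥ w)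
    - 2 * α * dotProduct_comm (P *ᵥ (A *ᵥ x)) (E *ᵥ w)
    + α * hP.dotProduct_mulVec_comm (B *ᵥ u) (E *ᵥ w)
    - 2 * α * dotProduct_comm (P *ᵥ (B *ᵥ u)) (E *ᵥ w)
    + α * hP.dotProduct_mulVec_comm (A *ᵥ x) (B *ᵥ u)
    - 2 * α * dotProduct_comm (P *ᵥ (A *ᵥ x)) (B *ᵥ u)
    + α * dotProduct_comm (A *ᵥ x) (P *ᵥ (A *ᵥ x))
    + α * dotProduct_comm (B *ᵥ u) (P *ᵥ (B *ᵥ u))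
    + α * dotProduct_comm (E *ᵥ w) (P *ᵥ (E *ᵥ w))

theorem stmt12_general {n m d : ℕ}
    (A : Matrix (Fin n) (Fin n) ℝ) (B : Matrix (Fin n) (Fin m) ℝ)
    (E : Matrix (Fin n) (Fin d) ℝ)
    (Q : Matrix (Fin n) (Fin n) ℝ) (R : Matrix (Fin m) (Fin m) ℝ)
    (α lam : ℝ) (hα : α ∈ Set.Ioo (0 : ℝ) 1)
    (hR : R.PosDef)
    (P : Matrix (Fin n) (Fin n) ℝ) (hP : P.PosSemidef)
    (hpd : (lam • (1 : Matrix (Fin d) (Fin d) ℝ) - α • (Eᵀ * P * E)).PosDef)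
    (g : Fin n → ℝ) (z : ℝ) (wbar : Fin d → ℝ)
    -- the blocks
    (Hxx : Matrix (Fin n) (Fin n) ℝ) (Hxu : Matrix (Fin n) (Fin m) ℝ)
    (Hxw : Matrix (Fin n) (Fin d) ℝ) (Huu : Matrix (Fin m) (Fin m) ℝ)
    (Huw : Matrix (Fin m) (Fin d) ℝ) (Hww : Matrix (Fin d) (Fin d) ℝ)
    (Gx : Fin n → ℝ) (Gu : Fin m → ℝ) (Gw : Fin d → ℝ)
    (hHxx : Hxx = Q + α • (Aᵀ * P * A)) (hHxu : Hxu = α • (Aᵀ * P * B))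
    (hHxw : Hxw = α • (Aᵀ * P * E)) (hHuu : Huu = R + α • (Bᵀ * P * B))
    (hHuw : Huw = α • (Bᵀ * P * E))
    (hHww : Hww = α • (Eᵀ * P * E) - lam • (1 : Matrix (Fin d) (Fin d) ℝ))
    (hGx : Gx = α • (Aᵀ *ᵥ g)) (hGu : Gu = α • (Bᵀ *ᵥ g))
    (hGw : Gw = α • (Eᵀ *ᵥ g) + (2 * lam) • wbar)
    -- updated quadratic parameters
    (Pplus : Matrix (Fin n) (Fin n) ℝ) (gplus : Fin n → ℝ) (zc : ℝ)
    (hPplus : Pplus = Hxx - fromCols Hxu Hxw *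
      (fromBlocks Huu Huw Huwᵀ Hww)⁻¹ * (fromCols Hxu Hxw)ᵀ)
    (hgplus : gplus = Gx - (fromCols Hxu Hxw * (fromBlocks Huu Huw Huwᵀ Hww)⁻¹) *ᵥ
      Sum.elim Gu Gw)
    (hzc : zc = α * z - lam * (wbar ⬝ᵥ wbar)
      - (1 / 4 : ℝ) * Matrix.trace (Hww⁻¹ * vecMulVec Gw Gw)
      - (1 / 4 : ℝ) * ((Gu - (Huw * Hww⁻¹) *ᵥ Gw) ⬝ᵥ
          ((Huu - Huw * Hww⁻¹ * Huwᵀ)⁻¹ *ᵥ (Gu - (Huw * Hww⁻¹) *ᵥ Gw))))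
    -- the state, the payoff, and the claimed minimizer
    (x : Fin n → ℝ) (f : (Fin m → ℝ) → (Fin d → ℝ) → ℝ)
    (hf : f = fun u w => x ⬝ᵥ (Q *ᵥ x) + u ⬝ᵥ (R *ᵥ u)
      - lam * ((w - wbar) ⬝ᵥ (w - wbar))
      + α * ((A *ᵥ x + B *ᵥ u + E *ᵥ w) ⬝ᵥ (P *ᵥ (A *ᵥ x + B *ᵥ u + E *ᵥ w))
          + g ⬝ᵥ (A *ᵥ x + B *ᵥ u + E *ᵥ w) + z))
    (K : Matrix (Fin m) (Fin n) ℝ) (r : Fin m → ℝ)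
    (hK : K = (Huu - Huw * Hww⁻¹ * Huwᵀ)⁻¹ * (Huw * Hww⁻¹ * Hxwᵀ - Hxuᵀ))
    (hr : r = (-(1 : ℝ) / 2) • ((Huu - Huw * Hww⁻¹ * Huwᵀ)⁻¹ *ᵥ
      (Gu - (Huw * Hww⁻¹) *ᵥ Gw)))
    (ustar : Fin m → ℝ) (hustar : ustar = K *ᵥ x + r) :
    (⨅ u : Fin m → ℝ, ⨆ w : Fin d → ℝ, f u w)
        = x ⬝ᵥ (Pplus *ᵥ x) + gplus ⬝ᵥ x + zc ∧
      IsMinOn (fun u => ⨆ w : Fin d → ℝ, f u w) Set.univ ustar ∧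
      ∀ u, u ≠ ustar →
        (⨆ w : Fin d → ℝ, f ustar w) < ⨆ w : Fin d → ℝ, f u w := by
  have hPs : P.IsSymm := isHermitian_iff_isSymm.mp hP.isHermitian
  have hHwwNeg : (-Hww).PosDef := by rw [hHww, neg_sub]; exact hpd
  have hHwwS : Hww.IsSymm := by simpa using hHwwNeg.isSymm.neg
  have hHwwU : IsUnit Hww := by simpa using hHwwNeg.isUnit.neg
  have hHuuPD : Huu.PosDef := hHuu ▸ hR.add_posSemidef (by
    simpa [conjTranspose_eq_transpose_of_trivial] using
      (hP.conjTranspose_mul_mul_same B).smul hα.1.le)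
  have hS := hHuuPD.sub_mul_inv_mul_transpose hHwwNeg Huw
  have hsup (u : Fin m → ℝ) : ⨆ w, f u w = quadratic (Huu - Huw * Hww⁻¹ * Huwᵀ)
      (Gu + (2 : ℝ) • (Hxuᵀ *ᵥ x) - (Huw * Hww⁻¹) *ᵥ (Gw + (2 : ℝ) • (Hxwᵀ *ᵥ x)))
      (criticalValue Hww (Gw + (2 : ℝ) • (Hxwᵀ *ᵥ x))
        (quadratic Hxx Gx (α * z - lam * (wbar ⬝ᵥ wbar)) x)) u := by
    simp only [hf, bellmanPayoff_eq_quadratic hPs z hHxx hHxu hHxw hHuu hHuw hHww hGx hGu hGw]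
    rw [iSup_quadratic hHwwNeg, criticalValue_add_two_smul_transpose_mulVec hHwwS]
  have hminimizer : ustar = criticalPoint (Huu - Huw * Hww⁻¹ * Huwᵀ)
      (Gu + (2 : ℝ) • (Hxuᵀ *ᵥ x) - (Huw * Hww⁻¹) *ᵥ (Gw + (2 : ℝ) • (Hxwᵀ *ᵥ x))) := by
    simp only [hustar, hK, hr, criticalPoint, mulVec_add, mulVec_sub, mulVec_smul,
      ← mulVec_mulVec, sub_mulVec, smul_add, smul_sub, smul_smul]
    module
  have hzc' : zc = criticalValue (fromBlocks Huu Huw Huwᵀ Hww) (Sum.elim Gu Gw)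
      (α * z - lam * (wbar ⬝ᵥ wbar)) := by
    rw [hzc, criticalValue_fromBlocks hHwwS hHwwU hS.isUnit, criticalValue, criticalValue,
      mul_vecMulVec, trace_vecMulVec, dotProduct_comm (Hww⁻¹ *ᵥ Gw)]
  simp only [hsup, hminimizer]
  refine ⟨?_, fun u _ => quadratic_criticalPoint_le hS _ _ u,
    fun u hu => quadratic_criticalPoint_lt hS _ _ hu⟩
  rw [iInf_quadratic hS, criticalValue_schurComplement_eq_quadratic hHuuPD.isSymm hHwwS hHwwU
    hS.isUnit, hPplus, hgplus, hzc', quadratic]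

/-- one-step Bellman identity for the deterministic zero-sum game with
per-stage cost `xᵀQx + uᵀRu − λ‖w−w̄‖²` and quadratic continuation value
`V(y) = yᵀPy + gᵀy + z`, together with uniqueness of the outer minimizer `u* = Kx + r`. -/
theorem stmt12 {n m d : ℕ}
    (A : Matrix (Fin n) (Fin n) ℝ) (B : Matrix (Fin n) (Fin m) ℝ)
    (E : Matrix (Fin n) (Fin d) ℝ)
    (Q : Matrix (Fin n) (Fin n) ℝ) (R : Matrix (Fin m) (Fin m) ℝ)
    (α lam : ℝ) (hα : α ∈ Set.Ioo (0 : ℝ) 1) (hlam : 0 < lam)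
    (hQ : Q.PosSemidef) (hR : R.PosDef)
    (P : Matrix (Fin n) (Fin n) ℝ) (hP : P.PosSemidef)
    (hpd : (lam • (1 : Matrix (Fin d) (Fin d) ℝ) - α • (Eᵀ * P * E)).PosDef)
    (g : Fin n → ℝ) (z : ℝ) (wbar : Fin d → ℝ)
    -- the blocks
    (Hxx : Matrix (Fin n) (Fin n) ℝ) (Hxu : Matrix (Fin n) (Fin m) ℝ)
    (Hxw : Matrix (Fin n) (Fin d) ℝ) (Huu : Matrix (Fin m) (Fin m) ℝ)
    (Huw : Matrix (Fin m) (Fin d) ℝ) (Hww : Matrix (Fin d) (Fin d) ℝ)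
    (Gx : Fin n → ℝ) (Gu : Fin m → ℝ) (Gw : Fin d → ℝ)
    (hHxx : Hxx = Q + α • (Aᵀ * P * A)) (hHxu : Hxu = α • (Aᵀ * P * B))
    (hHxw : Hxw = α • (Aᵀ * P * E)) (hHuu : Huu = R + α • (Bᵀ * P * B))
    (hHuw : Huw = α • (Bᵀ * P * E))
    (hHww : Hww = α • (Eᵀ * P * E) - lam • (1 : Matrix (Fin d) (Fin d) ℝ))
    (hGx : Gx = α • (Aᵀ *ᵥ g)) (hGu : Gu = α • (Bᵀ *ᵥ g))
    (hGw : Gw = α • (Eᵀ *ᵥ g) + (2 * lam) • wbar)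
    -- updated quadratic parameters
    (Pplus : Matrix (Fin n) (Fin n) ℝ) (gplus : Fin n → ℝ) (zc : ℝ)
    (hPplus : Pplus = Hxx - fromCols Hxu Hxw *
      (fromBlocks Huu Huw Huwᵀ Hww)⁻¹ * (fromCols Hxu Hxw)ᵀ)
    (hgplus : gplus = Gx - (fromCols Hxu Hxw * (fromBlocks Huu Huw Huwᵀ Hww)⁻¹) *ᵥ
      Sum.elim Gu Gw)
    (hzc : zc = α * z - lam * (wbar ⬝ᵥ wbar)
      - (1 / 4 : ℝ) * Matrix.trace (Hww⁻¹ * vecMulVec Gw Gw)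
      - (1 / 4 : ℝ) * ((Gu - (Huw * Hww⁻¹) *ᵥ Gw) ⬝ᵥ
          ((Huu - Huw * Hww⁻¹ * Huwᵀ)⁻¹ *ᵥ (Gu - (Huw * Hww⁻¹) *ᵥ Gw))))
    -- the state, the payoff, and the claimed minimizer
    (x : Fin n → ℝ) (f : (Fin m → ℝ) → (Fin d → ℝ) → ℝ)
    (hf : f = fun u w => x ⬝ᵥ (Q *ᵥ x) + u ⬝ᵥ (R *ᵥ u)
      - lam * ((w - wbar) ⬝ᵥ (w - wbar))
      + α * ((A *ᵥ x + B *ᵥ u + E *ᵥ w) ⬝ᵥ (P *ᵥ (A *ᵥ x + B *ᵥ u + E *ᵥ w))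
          + g ⬝ᵥ (A *ᵥ x + B *ᵥ u + E *ᵥ w) + z))
    (K : Matrix (Fin m) (Fin n) ℝ) (r : Fin m → ℝ)
    (hK : K = (Huu - Huw * Hww⁻¹ * Huwᵀ)⁻¹ * (Huw * Hww⁻¹ * Hxwᵀ - Hxuᵀ))
    (hr : r = (-(1 : ℝ) / 2) • ((Huu - Huw * Hww⁻¹ * Huwᵀ)⁻¹ *ᵥ
      (Gu - (Huw * Hww⁻¹) *ᵥ Gw)))
    (ustar : Fin m → ℝ) (hustar : ustar = K *ᵥ x + r) :
    (⨅ u : Fin m → ℝ, ⨆ w : Fin d → ℝ, f u w)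
        = x ⬝ᵥ (Pplus *ᵥ x) + gplus ⬝ᵥ x + zc ∧
      IsMinOn (fun u => ⨆ w : Fin d → ℝ, f u w) Set.univ ustar ∧
      ∀ u, u ≠ ustar →
        (⨆ w : Fin d → ℝ, f ustar w) < ⨆ w : Fin d → ℝ, f u w :=
  stmt12_general A B E Q R α lam hα hR P hP hpd g z wbar Hxx Hxu Hxw Huu Huw Hww Gx Gu Gw hHxx hHxu
    hHxw hHuu hHuw hHww hGx hGu hGw Pplus gplus zc hPplus hgplus hzc x f hf K r hK hr ustar hustar
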